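/- Screening test validity (nonzero branch): if for some u ∈ ℝ^m and ℓ ∈ S̄ one has D^ν(u) + π¹_ℓ(u) > p̄ with p̄ ≥ p*, then the optimal value of the node sub-problem at ν¹ = (S₀, S₁ ∪ {ℓ}, S̄ \ {ℓ}) exceeds p*, so no minimizer of the full problem satisfies the constraints of ν¹. -/

import Mathlib

/-- Pivot value πᵢ(u) = M(|aᵢᵀu| − λ/M). -/
noncomputable def piv {m n : ℕ} (A : Fin m → Fin n → ℝ) (lam M : ℝ)
    (i : Fin n) (u : Fin m → ℝ) : ℝ :=
  M * (|∑ j, A j i * u j| - lam / M)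

/-- Pivot value π⁰ᵢ(u) = M·max(0, |aᵢᵀu| − λ/M). -/
noncomputable def piv0 {m n : ℕ} (A : Fin m → Fin n → ℝ) (lam M : ℝ)
    (i : Fin n) (u : Fin m → ℝ) : ℝ :=
  M * max 0 (|∑ j, A j i * u j| - lam / M)

/-- Pivot value π¹ᵢ(u) = M·max(0, λ/M − |aᵢᵀu|). -/
noncomputable def piv1 {m n : ℕ} (A : Fin m → Fin n → ℝ) (lam M : ℝ)
    (i : Fin n) (u : Fin m → ℝ) : ℝ :=
  M * max 0 (lam / M - |∑ j, A j i * u j|)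

/-- Dual objective D^ν(u) of the ℓ₁-relaxation at node ν = (S₀, S₁, S̄). -/
noncomputable def dualObj {m n : ℕ} (A : Fin m → Fin n → ℝ) (y : Fin m → ℝ)
    (lam M : ℝ) (S1 Sbar : Finset (Fin n)) (u : Fin m → ℝ) : ℝ :=
  (1/2) * ∑ j, (y j)^2 - (1/2) * ∑ j, (y j - u j)^2
    - ∑ i ∈ Sbar, piv0 A lam M i u - ∑ i ∈ S1, piv A lam M i u

/-- Values of the full ℓ₀-penalized problem over the box ‖x‖∞ ≤ M. -/
noncomputable def fullSet {m n : ℕ} (A : Fin m → Fin n → ℝ) (y : Fin m → ℝ)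
    (lam M : ℝ) : Set ℝ :=
  {c | ∃ x : Fin n → ℝ, (∀ i, |x i| ≤ M) ∧
    c = (1/2) * ∑ j, (y j - ∑ i, A j i * x i)^2
          + lam * ((Finset.univ.filter fun i => x i ≠ 0).card : ℝ)}

/-- Values of the node sub-problem at node ν = (S₀, S₁, S̄). -/
noncomputable def nodeSet {m n : ℕ} (A : Fin m → Fin n → ℝ) (y : Fin m → ℝ)
    (lam M : ℝ) (S0 S1 Sbar : Finset (Fin n)) : Set ℝ :=
  {c | ∃ x : Fin n → ℝ, (∀ i, |x i| ≤ M) ∧ (∀ i ∈ S0, x i = 0) ∧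
    c = (1/2) * ∑ j, (y j - ∑ i, A j i * x i)^2
          + lam * ((Sbar.filter fun i => x i ≠ 0).card : ℝ) + lam * S1.card}

/-!
Weak duality: for `x` feasible at a node and any `u`, the dual objective `D^ν(u)` is at most
the node objective of `x`. The quadratic part follows from
`½‖y‖² − ½‖y − u‖² ≤ ½‖y − Ax‖² + ⟨u, Ax⟩`, and after transposing `⟨u, Ax⟩ = Σᵢ xᵢ aᵢᵀu` each
coordinate is bounded by `xᵢ aᵢᵀu ≤ M|aᵢᵀu| = πᵢ(u) + λ ≤ π⁰ᵢ(u) + λ`.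
Moving `ℓ` from `S̄` to `S₁` raises the dual objective by exactly `π⁰_ℓ − π_ℓ = π¹_ℓ`, so the test
gives `p* ≤ p̄ < D^{ν¹}(u) ≤` the optimal value at `ν¹`. A box-feasible `x` vanishing on `S₀` and
nonzero on `S₁ ∪ {ℓ}` has equal full and node objectives, hence also lies above `p*`.
-/

/-- A branch-and-bound node `ν = (S₀, S₁, S̄)`: coordinates fixed to zero, fixed nonzero, free. -/
structure IsNode {ι : Type*} [Fintype ι] [DecidableEq ι] (S0 S1 Sbar : Finset ι) : Prop where
  cover : S0 ∪ S1 ∪ Sbar = Finset.univ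
  disjoint01 : Disjoint S0 S1
  disjoint0b : Disjoint S0 Sbar
  disjoint1b : Disjoint S1 Sbar

namespace IsNode

variable {ι : Type*} [Fintype ι] [DecidableEq ι] {S0 S1 Sbar : Finset ι}

theorem sum_univ_eq (hν : IsNode S0 S1 Sbar) {M : Type*} [AddCommMonoid M] (f : ι → M) :
    ∑ i, f i = ∑ i ∈ S0, f i + ∑ i ∈ S1, f i + ∑ i ∈ Sbar, f i := by
  rw [← hν.cover, Finset.sum_union (Finset.disjoint_union_left.2 ⟨hν.disjoint0b, hν.disjoint1b⟩),
    Finset.sum_union hν.disjoint01]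

theorem notMem_one_of_mem_bar (hν : IsNode S0 S1 Sbar) {l : ι} (hl : l ∈ Sbar) : l ∉ S1 :=
  fun h => Finset.disjoint_left.1 hν.disjoint1b h hl

theorem insert_erase (hν : IsNode S0 S1 Sbar) {l : ι} (hl : l ∈ Sbar) :
    IsNode S0 (insert l S1) (Sbar.erase l) where
  cover := by
    rw [← hν.cover]
    ext i
    simp only [Finset.mem_union, Finset.mem_insert, Finset.mem_erase]
    by_cases hi : i = l
    · subst hi; tauto
    · tauto
  disjoint01 := Finset.disjoint_insert_right.2
    ⟨fun h => Finset.disjoint_left.1 hν.disjoint0b h hl, hν.disjoint01⟩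
  disjoint0b := hν.disjoint0b.mono_right (Finset.erase_subset _ _)
  disjoint1b := Finset.disjoint_insert_left.2
    ⟨Finset.notMem_erase _ _, hν.disjoint1b.mono_right (Finset.erase_subset _ _)⟩

theorem card_filter_ne_zero {R : Type*} [Zero R] [DecidableEq R] (hν : IsNode S0 S1 Sbar)
    {x : ι → R} (hx0 : ∀ i ∈ S0, x i = 0) (hx1 : ∀ i ∈ S1, x i ≠ 0) :
    (Finset.univ.filter fun i => x i ≠ 0).card = (Sbar.filter fun i => x i ≠ 0).card + S1.card := by
  simp only [Finset.card_filter]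
  rw [hν.sum_univ_eq, Finset.sum_eq_zero fun i hi => if_neg (not_not.2 (hx0 i hi)),
    Finset.sum_congr rfl fun i hi => if_pos (hx1 i hi), ← Finset.card_eq_sum_ones]
  ring

end IsNode

section Pivots

variable {m n : ℕ} (A : Fin m → Fin n → ℝ) {lam M : ℝ} (i : Fin n) (u : Fin m → ℝ)

theorem piv0_nonneg (hM : 0 ≤ M) : 0 ≤ piv0 A lam M i u := by
  unfold piv0
  positivity

theorem piv0_eq_piv_add_piv1 : piv0 A lam M i u = piv A lam M i u + piv1 A lam M i u := by
  unfold piv piv0 piv1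
  rw [← mul_add]
  congr 1
  rcases le_total 0 (|∑ j, A j i * u j| - lam / M) with h | h
  · rw [max_eq_right h, max_eq_left (by linarith)]; ring
  · rw [max_eq_left h, max_eq_right (by linarith)]; ring

theorem piv_le_piv0 (hM : 0 ≤ M) : piv A lam M i u ≤ piv0 A lam M i u := by
  rw [piv0_eq_piv_add_piv1, le_add_iff_nonneg_right]
  unfold piv1
  positivity

theorem piv_add_lam (hM : 0 < M) : piv A lam M i u + lam = M * |∑ j, A j i * u j| := by
  unfold piv
  field_simp
  ring

variable {A i u}

theorem mul_le_piv_add_lam (hM : 0 < M) {t : ℝ} (ht : |t| ≤ M) :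
    t * ∑ j, A j i * u j ≤ piv A lam M i u + lam := by
  rw [piv_add_lam A i u hM]
  calc t * ∑ j, A j i * u j ≤ |t| * |∑ j, A j i * u j| := by rw [← abs_mul]; exact le_abs_self _
    _ ≤ M * |∑ j, A j i * u j| := by gcongr

theorem mul_le_piv0_add_ite (hM : 0 < M) {t : ℝ} (ht : |t| ≤ M) :
    t * ∑ j, A j i * u j ≤ piv0 A lam M i u + if t ≠ 0 then lam else 0 := by
  by_cases h : t = 0
  · simpa [h] using piv0_nonneg A i u hM.le
  · rw [if_pos h]
    exact (mul_le_piv_add_lam hM ht).trans (by gcongr; exact piv_le_piv0 A i u hM.le)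

end Pivots

theorem sum_mul_sum_comm {ι κ : Type*} [Fintype ι] [Fintype κ] (A : κ → ι → ℝ)
    (u : κ → ℝ) (x : ι → ℝ) :
    ∑ j, u j * ∑ i, A j i * x i = ∑ i, x i * ∑ j, A j i * u j := by
  simp only [Finset.mul_sum]
  rw [Finset.sum_comm]
  refine Finset.sum_congr rfl fun i _ => Finset.sum_congr rfl fun j _ => by ring

theorem half_sum_sq_sub_half_sum_sq_le {κ : Type*} [Fintype κ] (y u w : κ → ℝ) :
    (1/2) * ∑ j, y j ^ 2 - (1/2) * ∑ j, (y j - u j) ^ 2 ≤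
      (1/2) * ∑ j, (y j - w j) ^ 2 + ∑ j, u j * w j := by
  simp only [Finset.mul_sum, ← Finset.sum_sub_distrib, ← Finset.sum_add_distrib]
  exact Finset.sum_le_sum fun j _ => by nlinarith [sq_nonneg (y j - u j - w j)]

section Duality

variable {m n : ℕ} (A : Fin m → Fin n → ℝ) (y : Fin m → ℝ) {lam M : ℝ}
  {S0 S1 Sbar : Finset (Fin n)}

theorem dualObj_le_nodeObj (hM : 0 < M) (hν : IsNode S0 S1 Sbar) (u : Fin m → ℝ)
    {x : Fin n → ℝ} (hx : ∀ i, |x i| ≤ M) (hx0 : ∀ i ∈ S0, x i = 0) :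
    dualObj A y lam M S1 Sbar u ≤
      (1/2) * ∑ j, (y j - ∑ i, A j i * x i) ^ 2
        + lam * ((Sbar.filter fun i => x i ≠ 0).card : ℝ) + lam * S1.card := by
  have hS0 : ∑ i ∈ S0, x i * ∑ j, A j i * u j = 0 :=
    Finset.sum_eq_zero fun i hi => by rw [hx0 i hi, zero_mul]
  have hS1 : ∑ i ∈ S1, x i * ∑ j, A j i * u j ≤ ∑ i ∈ S1, piv A lam M i u + lam * S1.card := by
    calc _ ≤ ∑ i ∈ S1, (piv A lam M i u + lam) :=
          Finset.sum_le_sum fun i _ => mul_le_piv_add_lam hM (hx i)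
      _ = _ := by rw [Finset.sum_add_distrib, Finset.sum_const, nsmul_eq_mul, mul_comm]
  have hSbar : ∑ i ∈ Sbar, x i * ∑ j, A j i * u j ≤
      ∑ i ∈ Sbar, piv0 A lam M i u + lam * ((Sbar.filter fun i => x i ≠ 0).card : ℝ) := by
    calc _ ≤ ∑ i ∈ Sbar, (piv0 A lam M i u + if x i ≠ 0 then lam else 0) :=
          Finset.sum_le_sum fun i _ => mul_le_piv0_add_ite hM (hx i)
      _ = _ := by
        rw [Finset.sum_add_distrib, ← Finset.sum_filter, Finset.sum_const, nsmul_eq_mul,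
          mul_comm]
  have hquad := half_sum_sq_sub_half_sum_sq_le y u (fun j => ∑ i, A j i * x i)
  rw [sum_mul_sum_comm, hν.sum_univ_eq] at hquad
  unfold dualObj
  linarith

theorem nodeSet_nonempty (hM : 0 ≤ M) (S0 S1 Sbar : Finset (Fin n)) :
    (nodeSet A y lam M S0 S1 Sbar).Nonempty :=
  ⟨_, fun _ => 0, fun _ => by simpa using hM, fun _ _ => rfl, rfl⟩

theorem dualObj_mem_lowerBounds_nodeSet (hM : 0 < M) (hν : IsNode S0 S1 Sbar)
    (u : Fin m → ℝ) :
    dualObj A y lam M S1 Sbar u ∈ lowerBounds (nodeSet A y lam M S0 S1 Sbar) := by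
  rintro c ⟨x, hx, hx0, rfl⟩
  exact dualObj_le_nodeObj A y hM hν u hx hx0

theorem dualObj_le_sInf_nodeSet (hM : 0 < M) (hν : IsNode S0 S1 Sbar) (u : Fin m → ℝ) :
    dualObj A y lam M S1 Sbar u ≤ sInf (nodeSet A y lam M S0 S1 Sbar) :=
  le_csInf (nodeSet_nonempty A y hM.le S0 S1 Sbar) (dualObj_mem_lowerBounds_nodeSet A y hM hν u)

theorem dualObj_insert_erase {l : Fin n} (hl : l ∈ Sbar) (hl1 : l ∉ S1) (u : Fin m → ℝ) :
    dualObj A y lam M (insert l S1) (Sbar.erase l) u =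
      dualObj A y lam M S1 Sbar u + piv1 A lam M l u := by
  unfold dualObj
  rw [Finset.sum_insert hl1, ← Finset.add_sum_erase _ _ hl, piv0_eq_piv_add_piv1]
  ring

end Duality

theorem screening_one_branch_general {m n : ℕ} (A : Fin m → Fin n → ℝ) (y : Fin m → ℝ)
    (lam M : ℝ) (hM : 0 < M)
    (S0 S1 Sbar : Finset (Fin n))
    (hcover : S0 ∪ S1 ∪ Sbar = Finset.univ)
    (h01 : Disjoint S0 S1) (h0b : Disjoint S0 Sbar) (h1b : Disjoint S1 Sbar)
    (l : Fin n) (hl : l ∈ Sbar) (u : Fin m → ℝ) (pbar : ℝ)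
    (hpbar : sInf (fullSet A y lam M) ≤ pbar)
    (htest : dualObj A y lam M S1 Sbar u + piv1 A lam M l u > pbar) :
    sInf (nodeSet A y lam M S0 (insert l S1) (Sbar.erase l))
        > sInf (fullSet A y lam M) ∧
    ∀ x : Fin n → ℝ, (∀ i, |x i| ≤ M) → (∀ i ∈ S0, x i = 0) →
      (∀ i ∈ insert l S1, x i ≠ 0) →
      (1/2) * ∑ j, (y j - ∑ i, A j i * x i)^2
          + lam * ((Finset.univ.filter fun i => x i ≠ 0).card : ℝ)
        > sInf (fullSet A y lam M) := by
  have hν : IsNode S0 S1 Sbar := ⟨hcover, h01, h0b, h1b⟩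
  have hν₁ := hν.insert_erase hl
  have hdual := dualObj_insert_erase A y (lam := lam) (M := M) hl (hν.notMem_one_of_mem_bar hl) u
  have hnode : sInf (fullSet A y lam M) <
      sInf (nodeSet A y lam M S0 (insert l S1) (Sbar.erase l)) := by
    linarith [dualObj_le_sInf_nodeSet A y (lam := lam) hM hν₁ u]
  refine ⟨hnode, fun x hx hx0 hx1 => hnode.trans_le ?_⟩
  have hmem : (1/2) * ∑ j, (y j - ∑ i, A j i * x i) ^ 2
      + lam * ((Finset.univ.filter fun i => x i ≠ 0).card : ℝ)
      ∈ nodeSet A y lam M S0 (insert l S1) (Sbar.erase l) := by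
    refine ⟨x, hx, hx0, ?_⟩
    rw [hν₁.card_filter_ne_zero hx0 hx1]
    push_cast
    ring
  exact csInf_le ⟨_, dualObj_mem_lowerBounds_nodeSet A y hM hν₁ u⟩ hmem

/-- Node-screening test validity (nonzero branch): if D^ν(u) + π¹_ℓ(u) > p̄ ≥ p*,
then the optimal value of the node sub-problem at ν¹ = (S₀, S₁ ∪ {ℓ}, S̄ ∖ {ℓ})
exceeds p*; hence no minimizer of the full problem satisfies the constraints
of ν¹. -/
theorem screening_one_branch {m n : ℕ} (A : Fin m → Fin n → ℝ) (y : Fin m → ℝ)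
    (lam M : ℝ) (hlam : 0 < lam) (hM : 0 < M)
    (S0 S1 Sbar : Finset (Fin n))
    (hcover : S0 ∪ S1 ∪ Sbar = Finset.univ)
    (h01 : Disjoint S0 S1) (h0b : Disjoint S0 Sbar) (h1b : Disjoint S1 Sbar)
    (l : Fin n) (hl : l ∈ Sbar) (u : Fin m → ℝ) (pbar : ℝ)
    (hpbar : sInf (fullSet A y lam M) ≤ pbar)
    (htest : dualObj A y lam M S1 Sbar u + piv1 A lam M l u > pbar) :
    sInf (nodeSet A y lam M S0 (insert l S1) (Sbar.erase l))
        > sInf (fullSet A y lam M) ∧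
    ∀ x : Fin n → ℝ, (∀ i, |x i| ≤ M) → (∀ i ∈ S0, x i = 0) →
      (∀ i ∈ insert l S1, x i ≠ 0) →
      (1/2) * ∑ j, (y j - ∑ i, A j i * x i)^2
          + lam * ((Finset.univ.filter fun i => x i ≠ 0).card : ℝ)
        > sInf (fullSet A y lam M) :=
  screening_one_branch_general A y lam M hM S0 S1 Sbar hcover h01 h0b h1b l hl u pbar hpbar htest
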